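/- arXiv:1606.07014 — 2 statements merged into one kernel-verified Lean document; each statement's English description precedes it below -/
import Mathlib

section
/- The binary quartic C4(f) = (a0*a4 - 4*a1*a3 + 3*a2²)*x1⁴ + (2*a0*a5 - 6*a1*a4 + 4*a2*a3)*x1³*x2 + (a0*a6 - 9*a2*a4 + 8*a3²)*x1²*x2² + (2*a1*a6 - 6*a2*a5 + 4*a3*a4)*x1*x2³ + (a2*a6 - 4*a3*a5 + 3*a4²)*x2⁴ is a covariant of binary sextics: for every binary sextic f = Σ_{i=0}^{6} a_i * C(6,i) * x1^{6-i} * x2^i over ℂ and every g in SL(2,ℂ), one has C4(g·f) = g·(C4(f)), where g acts on polynomials in x1, x2 by substitution (g·h)(x1,x2) = h(a*x1 + b*x2, c*x1 + d*x2). -/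
open MvPolynomial

/-- The action of a 2×2 matrix on polynomials in two variables by substitution:
`(g·h)(x1,x2) = h(a*x1 + b*x2, c*x1 + d*x2)` for `g = (a b; c d)`. -/
noncomputable def matAct (g : Matrix (Fin 2) (Fin 2) ℂ) :
    MvPolynomial (Fin 2) ℂ →ₐ[ℂ] MvPolynomial (Fin 2) ℂ :=
  aeval ![C (g 0 0) * X 0 + C (g 0 1) * X 1, C (g 1 0) * X 0 + C (g 1 1) * X 1]

/-- The binary sextic `f = Σ_{i=0}^{6} a_i * C(6,i) * x1^{6-i} * x2^i`. -/
noncomputable def sextic (a : Fin 7 → ℂ) : MvPolynomial (Fin 2) ℂ :=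
  ∑ i : Fin 7, C (a i * (Nat.choose 6 (i : ℕ) : ℂ)) * X 0 ^ (6 - (i : ℕ)) * X 1 ^ (i : ℕ)

/-- The binary quartic covariant `C4(f)` of a binary sextic with coefficients `a0,…,a6`. -/
noncomputable def quarticCovariant (a : Fin 7 → ℂ) : MvPolynomial (Fin 2) ℂ :=
  C (a 0 * a 4 - 4 * a 1 * a 3 + 3 * a 2 ^ 2) * X 0 ^ 4 +
  C (2 * a 0 * a 5 - 6 * a 1 * a 4 + 4 * a 2 * a 3) * X 0 ^ 3 * X 1 +
  C (a 0 * a 6 - 9 * a 2 * a 4 + 8 * a 3 ^ 2) * X 0 ^ 2 * X 1 ^ 2 +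
  C (2 * a 1 * a 6 - 6 * a 2 * a 5 + 4 * a 3 * a 4) * X 0 * X 1 ^ 3 +
  C (a 2 * a 6 - 4 * a 3 * a 5 + 3 * a 4 ^ 2) * X 1 ^ 4

/-!
Up to the factor `360² = 129600`, `C4(f)` is half the fourth transvectant
`(f, f)₄ = 2 (f₀₀₀₀ f₁₁₁₁ - 4 f₀₀₀₁ f₀₁₁₁ + 3 f₀₀₁₁²)`, because every fourth partial derivative
of a sextic in binomial normalisation is `360` times a quadratic with three consecutive
coefficients `aₖ, aₖ₊₁, aₖ₊₂`. By the chain rule the partial derivatives of `g·f` are linear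
combinations, with coefficients the entries of `g`, of `g` applied to those of `f`; the
transvectant therefore picks up exactly the factor `(det g)⁴`, which is `1` on `SL(2, ℂ)`.
-/

namespace MvPolynomial

theorem pderiv_pderiv_comm {R σ : Type*} [CommSemiring R] (i j : σ) (p : MvPolynomial σ R) :
    pderiv i (pderiv j p) = pderiv j (pderiv i p) := by
  classical
  induction p using MvPolynomial.induction_on with
  | C c => simp
  | add p q hp hq => simp only [map_add, hp, hq]
  | mul_X p k hp =>
    have hX : ∀ l m : σ, pderiv l (pderiv m (X k : MvPolynomial σ R)) = 0 := fun l m => by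
      rw [pderiv_X, Pi.single_apply]; split_ifs <;> simp
    simp only [pderiv_mul, map_add, hp, hX]
    ring

end MvPolynomial

section BinaryForm

variable {R : Type*} [CommSemiring R]

noncomputable def binaryForm (n : ℕ) (a : Fin (n + 1) → R) : MvPolynomial (Fin 2) R :=
  ∑ i : Fin (n + 1), C (a i * (n.choose i : R)) * X 0 ^ (n - i) * X 1 ^ (i : ℕ)

theorem pderiv_zero_binaryForm (n : ℕ) (a : Fin (n + 2) → R) :
    pderiv 0 (binaryForm (n + 1) a) = (n + 1) • binaryForm n (a ∘ Fin.castSucc) := by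
  have hterm (c : R) (i : ℕ) (hi : i ≤ n) :
      pderiv 0 (C (c * ((n + 1).choose i : R)) * X 0 ^ (n + 1 - i) * X 1 ^ i :
        MvPolynomial (Fin 2) R) =
        (n + 1) • (C (c * (n.choose i : R)) * X 0 ^ (n - i) * X 1 ^ i) := by
    have hchoose : (n + 1).choose i * (n - i + 1) = n.choose i * (n + 1) := by
      rw [Nat.choose_mul_succ_eq, show n + 1 - i = n - i + 1 by omega]
    rw [show n + 1 - i = n - i + 1 by omega]
    simp only [pderiv_mul, pderiv_C, pderiv_pow, pderiv_X_self, Nat.add_sub_cancel]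
    rw [pderiv_X_of_ne (by decide)]
    calc _ = C c * (((n + 1).choose i * (n - i + 1) : ℕ) : MvPolynomial (Fin 2) R) *
          X 0 ^ (n - i) * X 1 ^ i := by simp only [map_mul, map_natCast]; push_cast; ring
      _ = _ := by simp only [hchoose, nsmul_eq_mul, map_mul, map_natCast]; push_cast; ring
  rw [binaryForm, binaryForm, Fin.sum_univ_castSucc, map_add, Finset.smul_sum, map_sum]
  simp only [Fin.val_last, Nat.sub_self, pow_zero, mul_one, Fin.val_castSucc]
  rw [pderiv_C_mul, pderiv_pow, pderiv_X_of_ne (by decide), mul_zero, mul_zero, add_zero]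
  exact Finset.sum_congr rfl fun i _ => hterm _ i (Nat.lt_succ_iff.mp i.isLt)

theorem pderiv_one_binaryForm (n : ℕ) (a : Fin (n + 2) → R) :
    pderiv 1 (binaryForm (n + 1) a) = (n + 1) • binaryForm n (a ∘ Fin.succ) := by
  have hterm (c : R) (i : ℕ) :
      pderiv 1 (C (c * ((n + 1).choose (i + 1) : R)) * X 0 ^ (n + 1 - (i + 1)) * X 1 ^ (i + 1) :
        MvPolynomial (Fin 2) R) =
        (n + 1) • (C (c * (n.choose i : R)) * X 0 ^ (n - i) * X 1 ^ i) := by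
    rw [Nat.add_sub_add_right]
    simp only [pderiv_mul, pderiv_C, pderiv_pow, pderiv_X_self, Nat.add_sub_cancel]
    rw [pderiv_X_of_ne (by decide)]
    calc _ = C c * (((n + 1).choose (i + 1) * (i + 1) : ℕ) : MvPolynomial (Fin 2) R) *
          X 0 ^ (n - i) * X 1 ^ i := by simp only [map_mul, map_natCast]; push_cast; ring
      _ = _ := by
        simp only [← Nat.add_one_mul_choose_eq, nsmul_eq_mul, map_mul, map_natCast]
        push_cast; ring
  rw [binaryForm, binaryForm, Fin.sum_univ_succ, map_add, Finset.smul_sum, map_sum]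
  simp only [Fin.val_zero, pow_zero, mul_one, Fin.val_succ]
  rw [pderiv_C_mul, pderiv_pow, pderiv_X_of_ne (by decide), mul_zero, mul_zero, zero_add]
  exact Finset.sum_congr rfl fun i _ => hterm _ i

theorem binaryForm_two (b : Fin 3 → R) :
    binaryForm 2 b = C (b 0) * X 0 ^ 2 + 2 * C (b 1) * X 0 * X 1 + C (b 2) * X 1 ^ 2 := by
  simp only [binaryForm, Nat.reduceAdd, Fin.sum_univ_three, C_mul, map_natCast,
    Fin.coe_ofNat_eq_mod, Nat.reduceMod, Nat.choose_zero_right, Nat.choose_self, Nat.choose_one_right,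
    Nat.cast_one, pow_zero, pow_one, mul_one, Nat.reduceSub]
  ring

end BinaryForm

theorem sextic_eq_binaryForm (a : Fin 7 → ℂ) : sextic a = binaryForm 6 a := rfl

theorem pderiv_matAct (g : Matrix (Fin 2) (Fin 2) ℂ) (i : Fin 2) (p : MvPolynomial (Fin 2) ℂ) :
    pderiv i (matAct g p) =
      C (g 0 i) * matAct g (pderiv 0 p) + C (g 1 i) * matAct g (pderiv 1 p) := by
  have hX (j : Fin 2) : pderiv i (matAct g (X j)) =
      C (g 0 i) * matAct g (pderiv 0 (X j)) + C (g 1 i) * matAct g (pderiv 1 (X j)) := by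
    fin_cases j <;> fin_cases i <;> simp [matAct]
  induction p using MvPolynomial.induction_on with
  | C c => simp [matAct]
  | add p q hp hq => simp only [map_add, hp, hq]; ring
  | mul_X p j hp => simp only [map_mul, pderiv_mul, map_add, hp, hX]; ring

/-- Half of the fourth transvectant `(p, p)₄`. -/
noncomputable def transvectantFour (p : MvPolynomial (Fin 2) ℂ) : MvPolynomial (Fin 2) ℂ :=
  pderiv 0 (pderiv 0 (pderiv 0 (pderiv 0 p))) * pderiv 1 (pderiv 1 (pderiv 1 (pderiv 1 p)))
  - 4 * pderiv 0 (pderiv 0 (pderiv 0 (pderiv 1 p))) * pderiv 0 (pderiv 1 (pderiv 1 (pderiv 1 p)))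
  + 3 * pderiv 0 (pderiv 0 (pderiv 1 (pderiv 1 p))) ^ 2

theorem transvectantFour_matAct (g : Matrix (Fin 2) (Fin 2) ℂ) (p : MvPolynomial (Fin 2) ℂ) :
    transvectantFour (matAct g p) = C g.det ^ 4 * matAct g (transvectantFour p) := by
  simp only [transvectantFour, pderiv_matAct, map_add, map_mul, pderiv_C_mul,
    pderiv_pderiv_comm (R := ℂ) (1 : Fin 2) 0, map_sub, map_pow, map_ofNat, Matrix.det_fin_two]
  ring

theorem transvectantFour_sextic (a : Fin 7 → ℂ) :
    transvectantFour (sextic a) = 129600 * quarticCovariant a := by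
  simp only [transvectantFour, sextic_eq_binaryForm, pderiv_zero_binaryForm, pderiv_one_binaryForm,
    map_nsmul, binaryForm_two, quarticCovariant, map_add, map_sub, map_mul, map_pow, map_ofNat]
  simp only [Function.comp_apply, Fin.castSucc_zero, Fin.castSucc_one, Fin.reduceCastSucc,
    Fin.succ_zero_eq_one, Fin.succ_one_eq_two, Fin.reduceSucc, nsmul_eq_mul]
  ring

/-- The binary quartic `C4(f)` is a covariant of binary sextics: for every binary sextic `f`
and every `g ∈ SL(2,ℂ)`, one has `C4(g·f) = g·(C4(f))`. -/
theorem quarticCovariant_is_covariant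
    (g : Matrix.SpecialLinearGroup (Fin 2) ℂ) (a a' : Fin 7 → ℂ)
    (h : matAct (g : Matrix (Fin 2) (Fin 2) ℂ) (sextic a) = sextic a') :
    quarticCovariant a' = matAct (g : Matrix (Fin 2) (Fin 2) ℂ) (quarticCovariant a) := by
  have key := congrArg transvectantFour h
  rw [transvectantFour_matAct, g.det_coe, map_one, one_pow, one_mul, transvectantFour_sextic,
    transvectantFour_sextic, map_mul, map_ofNat] at key
  exact (mul_left_cancel₀ (by norm_num) key).symm
end

section
/- The norm of the algebraic number 147859080656 + 507187008*√25249 + 7⁷ - 87695981800 - 809077248*√18209 + 7²⁰ in the biquadratic field ℚ(√25249, √18209) is an integer divisible by 4057. Concretely: the real number Π_{ε1 ∈ {1,-1}} Π_{ε2 ∈ {1,-1}} ( 147859080656 + ε1*507187008*√25249 + 7⁷ - 87695981800 - ε2*809077248*√18209 + 7²⁰ ) equals 4057*k for some integer k. (This verifies Harder's conjectured congruence modulo 4057 between the Hecke eigenvalues at p = 7 of the Siegel eigenform χ⁻_{12,9} of weight (12,9) and the elliptic eigenform f28 of weight 28, via λ(p) ≡ p^{k-2} + a(p) + p^{j+k-1}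 mod ℓ with (j,k) = (12,9).) -/
/-- Harder's congruence at `p = 7` for weight `(12,9)`: the norm, in the biquadratic field
`ℚ(√25249, √18209)`, of `147859080656 + 507187008√25249 + 7⁷ - 87695981800 - 809077248√18209
+ 7²⁰` is an integer divisible by `4057`. -/
theorem harder_congruence_weight_12_9_p7 :
    ∃ k : ℤ,
      (∏ ε1 ∈ ({1, -1} : Finset ℤ), ∏ ε2 ∈ ({1, -1} : Finset ℤ),
        ((147859080656 : ℝ) + (ε1 : ℝ) * 507187008 * Real.sqrt 25249 + 7 ^ 7 -
          87695981800 - (ε2 : ℝ) * 809077248 * Real.sqrt 18209 + 7 ^ 20)) =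
      4057 * (k : ℝ) := by
  use 9991702700369583932423027122501107748670604481106949187829760000
  have hs : Real.sqrt 25249 * Real.sqrt 25249 = 25249 :=
    Real.mul_self_sqrt (by norm_num)
  have ht : Real.sqrt 18209 * Real.sqrt 18209 = 18209 :=
    Real.mul_self_sqrt (by norm_num)
  simp only [Finset.prod_pair (by norm_num : (1 : ℤ) ≠ -1)]
  push_cast
  set s := Real.sqrt 25249
  set t := Real.sqrt 18209
  linear_combination
    (66171728756284933163027274814980096 * (s * s)
      - 3275582118258333491612321306241513563409978023215104) * hs +
    (428509006374275908294777127112278016 * (t * t)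
      - 8335510987704857894040980892699859342515515116486656
      - 336779938472728846397562310216384512 * (s * s)) * ht
end
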